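/- A finite-dimensional p-envelope (G, [p], i) of a finite-dimensional Lie algebra L over a field of characteristic p > 0 is minimal if and only if C(G) ⊆ i(L), where C(G) is the center of G. -/

import Mathlib

/-!
If `C(G) ⊄ i(L)`, pick `z ∈ C(G) \ i(L)` and a functional `f` with `f z ≠ 0` and `f (i L) = 0`.
Since `[G, G] ⊆ i(L)` and `z` is central, `x ↦ π (x^[p])` with `π = id - f(·) f(z)⁻¹ z` is again
a `p`-map, and for it `i(L)` generates a `p`-subalgebra inside `ker f`: a smaller envelope.
Conversely `G` acts on the ideal `i(L) ≅ L` by `ad` with kernel `C(G)` and image the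
`p`-subalgebra of `End L` generated by `ad L`, which depends on `L` only. Hence
`dim G = dim ⟨ad L⟩_p + dim C(G)`, where `dim C(G) ≥ dim C(L)` with equality when `C(G) ⊆ i(L)`.
-/

open scoped TensorProduct

/-- Iterated adjoint action: `adIter z n w = (ad z)^n w`. -/
def adIter {L : Type*} [LieRing L] (z : L) : ℕ → L → L
  | 0, w => w
  | n+1, w => ⁅z, adIter z n w⁆

/-- A `p`-semilinear map between `F`-vector spaces. -/
def IsPSemilinear (p : ℕ) (F : Type*) [Field F] {V W : Type*}
    [AddCommGroup V] [Module F V] [AddCommGroup W] [Module F W] (f : V → W) : Prop :=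
  ∀ (a : F) (x y : V), f (a • x + y) = a ^ p • f x + f y

/-- `pm` is a `p`-mapping on the Lie algebra `L` over `F`. -/
structure IsPMap (p : ℕ) (F : Type*) [Field F] (L : Type*) [LieRing L] [LieAlgebra F L]
    (pm : L → L) : Prop where
  ad_pow : ∀ a x : L, ⁅pm a, x⁆ = adIter a p x
  smul_pow : ∀ (c : F) (a : L), pm (c • a) = c ^ p • pm a
  add_pow : ∀ a b : L, ∃ s : Fin (p - 1) → L,
    adIter ((Polynomial.X : Polynomial F) ⊗ₜ[F] a + (1 : Polynomial F) ⊗ₜ[F] b) (p - 1)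
        ((1 : Polynomial F) ⊗ₜ[F] a)
      = (∑ j : Fin (p - 1), ((j : ℕ) + 1) •
          (((Polynomial.X : Polynomial F) ^ (j : ℕ)) ⊗ₜ[F] s j)) ∧
    pm (a + b) = pm a + pm b + ∑ j : Fin (p - 1), s j

/-- `H` is a `p`-subalgebra w.r.t. the map `pm`. -/
def IsPSubalgebra (F : Type*) [Field F] {L : Type*} [LieRing L] [LieAlgebra F L]
    (pm : L → L) (H : LieSubalgebra F L) : Prop :=
  ∀ x ∈ H, pm x ∈ H

/-- The `p`-subalgebra generated by a set `S`. -/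
def pSpan (F : Type*) [Field F] {L : Type*} [LieRing L] [LieAlgebra F L]
    (pm : L → L) (S : Set L) : LieSubalgebra F L :=
  sInf {H : LieSubalgebra F L | IsPSubalgebra F pm H ∧ S ⊆ H}

/-- An element `x` is semisimple if it lies in the `p`-subalgebra generated by `pm x`. -/
def IsSemisimpleElt (F : Type*) [Field F] {L : Type*} [LieRing L] [LieAlgebra F L]
    (pm : L → L) (x : L) : Prop :=
  x ∈ pSpan F pm {pm x}

/-- An element is `p`-nilpotent if some iterate of the `p`-map kills it. -/
def IsPNilpotentElt {L : Type*} (pm : L → L) [Zero L] (x : L) : Prop :=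
  ∃ n : ℕ, pm^[n] x = 0

universe u

/-- A `p`-envelope of a Lie algebra `L`: a restricted Lie algebra together with an injective
Lie homomorphism from `L` whose image generates it as a `p`-subalgebra. -/
structure PEnvelope (p : ℕ) (F : Type u) [Field F] (L : Type u) [LieRing L]
    [LieAlgebra F L] where
  carrier : Type u
  [lieRing : LieRing carrier]
  [lieAlg : LieAlgebra F carrier]
  pm : carrier → carrier
  isPMap : IsPMap p F carrier pm
  incl : L →ₗ⁅F⁆ carrier
  injective : Function.Injective incl
  generates : pSpan F pm (Set.range incl) = ⊤

attribute [instance] PEnvelope.lieRing PEnvelope.lieAlg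

/-- A finite-dimensional `p`-envelope is minimal if its dimension is least among the
dimensions of all finite-dimensional `p`-envelopes of `L`. -/
def PEnvelope.IsMinimal {p : ℕ} {F : Type u} [Field F] {L : Type u} [LieRing L]
    [LieAlgebra F L] (E : PEnvelope p F L) : Prop :=
  FiniteDimensional F E.carrier ∧
    ∀ E' : PEnvelope p F L, FiniteDimensional F E'.carrier →
      Module.finrank F E.carrier ≤ Module.finrank F E'.carrier

open scoped Polynomial
open Polynomial (X)

section PSpan

variable {F : Type*} [Field F] {M : Type*} [LieRing M] [LieAlgebra F M] {pm : M → M}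

theorem mem_pSpan_iff {S : Set M} {x : M} :
    x ∈ pSpan F pm S ↔ ∀ H : LieSubalgebra F M, IsPSubalgebra F pm H → S ⊆ H → x ∈ H := by
  rw [← SetLike.mem_coe, pSpan, LieSubalgebra.coe_sInf]
  simp only [Set.mem_ofPred_eq, Set.mem_iInter, SetLike.mem_coe, and_imp]

theorem subset_pSpan (S : Set M) : S ⊆ pSpan F pm S :=
  fun _ hx => mem_pSpan_iff.2 fun _ _ hS => hS hx

theorem pSpan_le {S : Set M} {H : LieSubalgebra F M} (hH : IsPSubalgebra F pm H) (hS : S ⊆ H) :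
    pSpan F pm S ≤ H :=
  fun _ hx => mem_pSpan_iff.1 hx H hH hS

theorem isPSubalgebra_pSpan (S : Set M) : IsPSubalgebra F pm (pSpan F pm S) :=
  fun _ hx => mem_pSpan_iff.2 fun H hH hS => hH _ (mem_pSpan_iff.1 hx H hH hS)

def IsPSubalgebra.restrict {H : LieSubalgebra F M} (hH : IsPSubalgebra F pm H) (x : H) : H :=
  ⟨pm x, hH x x.2⟩

theorem pSpan_restrict_preimage_eq_top (S : Set M) :
    pSpan F (isPSubalgebra_pSpan (F := F) (pm := pm) S).restrict (Subtype.val ⁻¹' S) = ⊤ := by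
  set H := pSpan F pm S
  refine eq_top_iff.2 fun x _ => mem_pSpan_iff.2 fun H' hH' hS => ?_
  have hle : H ≤ H'.map H.incl := by
    refine pSpan_le ?_ fun y hy => ⟨⟨y, subset_pSpan S hy⟩, hS hy, rfl⟩
    rintro _ ⟨y, hy, rfl⟩
    exact ⟨_, hH' y hy, rfl⟩
  obtain ⟨y, hy, hyx⟩ := hle x.2
  rwa [Subtype.ext hyx] at hy

end PSpan

section AdIter

variable {L : Type*} [LieRing L]

theorem adIter_succ' (z w : L) (n : ℕ) : adIter z (n + 1) w = adIter z n ⁅z, w⁆ := by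
  induction n with
  | zero => rfl
  | succ n ih => exact congrArg (⁅z, ·⁆) ih

theorem adIter_zero_right (z : L) (n : ℕ) : adIter z n 0 = 0 := by
  induction n with
  | zero => rfl
  | succ n ih => exact (congrArg (⁅z, ·⁆) ih).trans (lie_zero z)

theorem LieHom.map_adIter {R L' : Type*} [CommRing R] [LieAlgebra R L] [LieRing L']
    [LieAlgebra R L'] (f : L →ₗ⁅R⁆ L') (z w : L) (n : ℕ) :
    f (adIter z n w) = adIter (f z) n (f w) := by
  induction n with
  | zero => rfl
  | succ n ih => exact (f.map_lie _ _).trans (congrArg (⁅f z, ·⁆) ih)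

end AdIter

section JacobsonCoefficients

variable {F : Type*} [Field F]

noncomputable def tensorCoeff (M : Type*) [AddCommGroup M] [Module F M] (n : ℕ) :
    F[X] ⊗[F] M →ₗ[F] M :=
  TensorProduct.lid F M ∘ₗ (Polynomial.lcoeff F n).rTensor M

variable {M N : Type*} [AddCommGroup M] [Module F M] [AddCommGroup N] [Module F N]

@[simp]
theorem tensorCoeff_tmul (n : ℕ) (f : F[X]) (x : M) :
    tensorCoeff M n (f ⊗ₜ[F] x) = f.coeff n • x := by
  simp [tensorCoeff]

theorem tensorCoeff_lTensor (g : N →ₗ[F] M) (n : ℕ) (w : F[X] ⊗[F] N) :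
    tensorCoeff M n (g.lTensor F[X] w) = g (tensorCoeff N n w) := by
  induction w using TensorProduct.induction_on with
  | zero => simp
  | tmul f x => simp
  | add a b ha hb => simp only [map_add, ha, hb]

theorem tensorCoeff_mem_of_mem_baseChange {S : Submodule F M} {u : F[X] ⊗[F] M}
    (hu : u ∈ S.baseChange F[X]) (n : ℕ) : tensorCoeff M n u ∈ S := by
  obtain ⟨w, rfl⟩ := hu
  rw [LinearMap.baseChange_eq_ltensor, tensorCoeff_lTensor]
  exact (tensorCoeff S n w).2

/-- The right-hand side `∑ⱼ (j + 1) Xʲ ⊗ sⱼ` of Jacobson's formula for `(a + b)^[p]`. -/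
noncomputable def jacobsonSum (F : Type*) [Field F] {M : Type*} [AddCommGroup M] [Module F M]
    {m : ℕ} (s : Fin m → M) : F[X] ⊗[F] M :=
  ∑ j : Fin m, ((j : ℕ) + 1) • (((X : F[X]) ^ (j : ℕ)) ⊗ₜ[F] s j)

theorem tensorCoeff_jacobsonSum {m : ℕ} (s : Fin m → M) (k : Fin m) :
    tensorCoeff M k (jacobsonSum F s) = ((k : ℕ) + 1) • s k := by
  simp only [jacobsonSum, map_sum, map_nsmul, tensorCoeff_tmul, Polynomial.coeff_X_pow,
    Fin.val_inj, ite_smul, one_smul, zero_smul, smul_ite, smul_zero, Finset.sum_ite_eq,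
    Finset.mem_univ, if_true]

/-- The coefficients can be read off since `1, …, p - 1` are invertible in characteristic `p`. -/
theorem mem_of_jacobsonSum_mem_baseChange (p : ℕ) [CharP F p] {S : Submodule F M}
    {s : Fin (p - 1) → M} (hs : jacobsonSum F s ∈ S.baseChange F[X]) (k : Fin (p - 1)) :
    s k ∈ S := by
  have hk : (((k : ℕ) + 1 : ℕ) : F) ≠ 0 := by
    rw [Ne, CharP.cast_eq_zero_iff F p]
    exact Nat.not_dvd_of_pos_of_lt k.val.succ_pos (by omega)
  have h := tensorCoeff_mem_of_mem_baseChange hs k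
  rw [tensorCoeff_jacobsonSum, ← Nat.cast_smul_eq_nsmul F] at h
  exact (S.smul_mem_iff hk).1 h

end JacobsonCoefficients

section Jacobson

variable {F : Type*} [Field F] {M : Type*} [LieRing M] [LieAlgebra F M]

noncomputable abbrev LieSubalgebra.polyIncl (H : LieSubalgebra F M) :
    F[X] ⊗[F] H →ₗ⁅F⁆ F[X] ⊗[F] M :=
  LieAlgebra.ExtendScalars.map (AlgHom.id F F[X]) H.incl

theorem LieSubalgebra.polyIncl_injective (H : LieSubalgebra F M) :
    Function.Injective H.polyIncl :=
  Module.Flat.lTensor_preserves_injective_linearMap H.incl.toLinearMap Subtype.val_injective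

theorem LieSubalgebra.polyIncl_adIter (H : LieSubalgebra F M) (a b : H) (n : ℕ) :
    H.polyIncl (adIter ((X : F[X]) ⊗ₜ[F] a + (1 : F[X]) ⊗ₜ[F] b) n ((1 : F[X]) ⊗ₜ[F] a)) =
      adIter ((X : F[X]) ⊗ₜ[F] (a : M) + (1 : F[X]) ⊗ₜ[F] (b : M)) n
        ((1 : F[X]) ⊗ₜ[F] (a : M)) := by
  rw [LieHom.map_adIter]
  simp

variable (p : ℕ) [CharP F p]

theorem jacobsonCoeff_mem_derived {a b : M} {s : Fin (p - 1) → M}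
    (hs : adIter ((X : F[X]) ⊗ₜ[F] a + (1 : F[X]) ⊗ₜ[F] b) (p - 1) ((1 : F[X]) ⊗ₜ[F] a) =
      jacobsonSum F s) (k : Fin (p - 1)) :
    s k ∈ ⁅(⊤ : LieIdeal F M), (⊤ : LieIdeal F M)⁆ := by
  obtain ⟨n, hn⟩ : ∃ n, p - 1 = n + 1 := ⟨p - 2, by have := k.2; omega⟩
  refine mem_of_jacobsonSum_mem_baseChange p
    (S := ⁅(⊤ : LieIdeal F M), (⊤ : LieIdeal F M)⁆.toSubmodule) ?_ k
  rw [← hs, hn, ← LieSubmodule.coe_baseChange, LieSubmodule.lie_baseChange,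
    LieSubmodule.baseChange_top]
  exact LieSubmodule.lie_mem_lie trivial trivial

theorem jacobsonCoeff_mem_of_mem {H : LieSubalgebra F M} {a b : M} (ha : a ∈ H) (hb : b ∈ H)
    {s : Fin (p - 1) → M}
    (hs : adIter ((X : F[X]) ⊗ₜ[F] a + (1 : F[X]) ⊗ₜ[F] b) (p - 1) ((1 : F[X]) ⊗ₜ[F] a) =
      jacobsonSum F s) (k : Fin (p - 1)) :
    s k ∈ H := by
  refine mem_of_jacobsonSum_mem_baseChange p (S := H.toSubmodule) ?_ k
  rw [← hs, ← H.polyIncl_adIter ⟨a, ha⟩ ⟨b, hb⟩]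
  exact ⟨_, rfl⟩

end Jacobson

namespace IsPMap

variable {p : ℕ} {F : Type*} [Field F] {M : Type*} [LieRing M] [LieAlgebra F M] {pm : M → M}

theorem lie_eq_zero (hpm : IsPMap p F M pm) (hp : p ≠ 0) {x y : M} (h : ⁅x, y⁆ = 0) :
    ⁅pm x, y⁆ = 0 := by
  obtain ⟨n, rfl⟩ := Nat.exists_eq_succ_of_ne_zero hp
  rw [hpm.ad_pow, adIter_succ', h, adIter_zero_right]

theorem lie_mem_of_forall_lie_mem (hpm : IsPMap p F M pm) (hp : p ≠ 0) {V : Submodule F M}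
    {x : M} (h : ∀ y, ⁅x, y⁆ ∈ V) (y : M) : ⁅pm x, y⁆ ∈ V := by
  obtain ⟨n, rfl⟩ := Nat.exists_eq_succ_of_ne_zero hp
  rw [hpm.ad_pow]
  exact h _

theorem lie_mem_of_lie_mem (hpm : IsPMap p F M pm) {V : Submodule F M} {x : M}
    (h : ∀ y ∈ V, ⁅x, y⁆ ∈ V) {y : M} (hy : y ∈ V) : ⁅pm x, y⁆ ∈ V := by
  rw [hpm.ad_pow]
  exact Nat.rec hy (fun _ ih => h _ ih) p

theorem restrict [CharP F p] (hpm : IsPMap p F M pm) {H : LieSubalgebra F M}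
    (hH : IsPSubalgebra F pm H) : IsPMap p F H hH.restrict where
  ad_pow a x := Subtype.ext <| (hpm.ad_pow a x).trans (H.incl.map_adIter a x p).symm
  smul_pow c a := Subtype.ext <| hpm.smul_pow c a
  add_pow a b := by
    obtain ⟨s, hs, hsum⟩ := hpm.add_pow a b
    refine ⟨fun j => ⟨s j, jacobsonCoeff_mem_of_mem p a.2 b.2 hs j⟩, H.polyIncl_injective ?_,
      Subtype.ext ?_⟩
    · rw [H.polyIncl_adIter]
      refine hs.trans ?_
      simp [map_sum, map_nsmul]
    · simpa [IsPSubalgebra.restrict] using hsum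

/-- Central corrections do not change `ad`, and the Jacobson correction terms lie in the
derived algebra. -/
theorem linearMap_comp [CharP F p] (hpm : IsPMap p F M pm) (π : M →ₗ[F] M)
    (hcen : ∀ x, π x - x ∈ LieAlgebra.center F M)
    (hder : ∀ x ∈ ⁅(⊤ : LieIdeal F M), (⊤ : LieIdeal F M)⁆, π x = x) :
    IsPMap p F M (π ∘ pm) where
  ad_pow a x := by
    have h := (LieModule.mem_maxTrivSubmodule F M M _).1 (hcen (pm a)) x
    rw [← hpm.ad_pow, Function.comp_apply, ← sub_add_cancel (π (pm a)) (pm a), add_lie,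
      ← lie_skew, h, neg_zero, zero_add]
  smul_pow c a := by simp [hpm.smul_pow]
  add_pow a b := by
    obtain ⟨s, hs, hsum⟩ := hpm.add_pow a b
    refine ⟨s, hs, ?_⟩
    simp only [Function.comp_apply, hsum, map_add, map_sum]
    congr 1
    exact Finset.sum_congr rfl fun j _ => hder _ (jacobsonCoeff_mem_derived p hs j)

end IsPMap

def LieSubalgebra.centralizer (R : Type*) {L : Type*} [CommRing R] [LieRing L] [LieAlgebra R L]
    (x : L) : LieSubalgebra R L where
  carrier := {y | ⁅y, x⁆ = 0}
  zero_mem' := zero_lie x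
  add_mem' hy hz := by simp_all [add_lie]
  smul_mem' c y hy := by simp_all [smul_lie]
  lie_mem' {y z} hy hz := by simp_all [lie_lie]

namespace PEnvelope

variable {p : ℕ} {F : Type u} [Field F] {L : Type u} [LieRing L] [LieAlgebra F L]
  (E : PEnvelope p F L)

theorem eq_top_of_isPSubalgebra {H : LieSubalgebra F E.carrier} (hH : IsPSubalgebra F E.pm H)
    (hL : ∀ x, E.incl x ∈ H) : H = ⊤ :=
  top_le_iff.1 <| E.generates ▸ pSpan_le hH (Set.range_subset_iff.2 hL)

theorem lie_incl_mem_range (g : E.carrier) (y : L) : ⁅g, E.incl y⁆ ∈ E.incl.range := by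
  have htop : E.incl.range.normalizer = ⊤ := by
    refine E.eq_top_of_isPSubalgebra (fun x hx => ?_) fun x => ?_ <;>
      rw [LieSubalgebra.mem_normalizer_iff]
    · exact fun y hy => E.isPMap.lie_mem_of_lie_mem (V := E.incl.range.toSubmodule)
        ((LieSubalgebra.mem_normalizer_iff _ x).1 hx) hy
    · rintro _ ⟨y, rfl⟩
      exact ⟨⁅x, y⁆, E.incl.map_lie x y⟩
  exact (LieSubalgebra.mem_normalizer_iff _ g).1 (htop.ge (LieSubalgebra.mem_top _)) _ ⟨y, rfl⟩

def rangeIdeal : LieIdeal F E.carrier where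
  toSubmodule := E.incl.range.toSubmodule
  lie_mem {g _} := by
    rintro ⟨y, rfl⟩
    exact E.lie_incl_mem_range g y

theorem lie_mem_rangeIdeal (hp : p ≠ 0) (g x : E.carrier) : ⁅g, x⁆ ∈ E.rangeIdeal := by
  have htop : (E.rangeIdeal.normalizer : LieSubalgebra F E.carrier) = ⊤ := by
    refine E.eq_top_of_isPSubalgebra (fun x hx => ?_) fun x => ?_ <;>
      simp only [LieIdeal.mem_toLieSubalgebra, LieSubmodule.mem_normalizer]
    · intro y
      rw [← lie_skew, neg_mem_iff]
      refine E.isPMap.lie_mem_of_forall_lie_mem hp (V := E.rangeIdeal.toSubmodule)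
        (fun y => ?_) y
      rw [← lie_skew, neg_mem_iff]
      exact (LieSubmodule.mem_normalizer _ _).1 hx y
    · exact fun y => E.lie_incl_mem_range y x
  have hx : x ∈ (E.rangeIdeal.normalizer : LieSubalgebra F E.carrier) :=
    htop.ge (LieSubalgebra.mem_top _)
  exact (LieSubmodule.mem_normalizer _ _).1 hx g

theorem derived_le_rangeIdeal (hp : p ≠ 0) :
    ⁅(⊤ : LieIdeal F E.carrier), (⊤ : LieIdeal F E.carrier)⁆ ≤ E.rangeIdeal :=
  (LieSubmodule.lie_le_iff ..).2 fun g _ x _ => E.lie_mem_rangeIdeal hp g x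

theorem mem_center_iff (hp : p ≠ 0) {g : E.carrier} :
    g ∈ LieAlgebra.center F E.carrier ↔ ∀ y, ⁅E.incl y, g⁆ = 0 := by
  refine ⟨fun hg y => (LieModule.mem_maxTrivSubmodule F _ _ g).1 hg _, fun hg => ?_⟩
  have htop : LieSubalgebra.centralizer F g = ⊤ :=
    E.eq_top_of_isPSubalgebra (fun x hx => E.isPMap.lie_eq_zero hp hx) hg
  exact (LieModule.mem_maxTrivSubmodule F _ _ g).2 fun x => htop.ge (LieSubalgebra.mem_top x)

theorem incl_mem_center (hp : p ≠ 0) {z : L} (hz : z ∈ LieAlgebra.center F L) :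
    E.incl z ∈ LieAlgebra.center F E.carrier :=
  (E.mem_center_iff hp).2 fun y => by
    rw [← E.incl.map_lie, (LieModule.mem_maxTrivSubmodule F L L z).1 hz y, map_zero]

noncomputable def ofPSpan [CharP F p] {M : Type u} [LieRing M] [LieAlgebra F M] {pm : M → M}
    (hpm : IsPMap p F M pm) (i : L →ₗ⁅F⁆ M) (hi : Function.Injective i) : PEnvelope p F L where
  carrier := pSpan F pm (Set.range i)
  pm := (isPSubalgebra_pSpan _).restrict
  isPMap := hpm.restrict _
  incl := (LieSubalgebra.inclusion fun _ hy => subset_pSpan _ ((i.mem_range _).1 hy)).comp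
    i.rangeRestrict
  injective x y h := hi (congrArg Subtype.val h)
  generates := by
    convert pSpan_restrict_preimage_eq_top (Set.range i)
    ext x
    exact ⟨fun ⟨y, hy⟩ => ⟨y, congrArg Subtype.val hy⟩, fun ⟨y, hy⟩ => ⟨y, Subtype.ext hy⟩⟩

theorem exists_finrank_lt [CharP F p] (hp : p ≠ 0) [FiniteDimensional F E.carrier]
    {z : E.carrier} (hz : z ∈ LieAlgebra.center F E.carrier) (hzL : z ∉ Set.range E.incl) :
    ∃ E' : PEnvelope p F L, FiniteDimensional F E'.carrier ∧
      Module.finrank F E'.carrier < Module.finrank F E.carrier := by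
  obtain ⟨f, hfz, hfL⟩ := Submodule.exists_dual_map_eq_bot_of_notMem
    (p := E.rangeIdeal.toSubmodule) hzL inferInstance
  have hf : ∀ x ∈ E.rangeIdeal, f x = 0 := fun x hx => LinearMap.le_ker_iff_map.2 hfL hx
  let π : E.carrier →ₗ[F] E.carrier := LinearMap.id - (f z)⁻¹ • f.smulRight z
  have hπ : ∀ x, π x = x - (f x * (f z)⁻¹) • z := fun x => by
    simp [π, mul_smul, smul_comm (f z)⁻¹]
  have hpm : IsPMap p F E.carrier (π ∘ E.pm) := by
    refine E.isPMap.linearMap_comp π (fun x => ?_) fun x hx => ?_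
    · rw [hπ, sub_sub_cancel_left]
      exact neg_mem (Submodule.smul_mem _ _ hz)
    · rw [hπ, hf x (E.derived_le_rangeIdeal hp hx)]
      simp
  let K : LieSubalgebra F E.carrier :=
    { LinearMap.ker f with lie_mem' := fun _ _ => hf _ (E.lie_mem_rangeIdeal hp _ _) }
  have hK : IsPSubalgebra F (π ∘ E.pm) K := fun x _ => by
    show f (π (E.pm x)) = 0
    rw [hπ, map_sub, map_smul, smul_eq_mul, inv_mul_cancel_right₀ hfz, sub_self]
  have hzK : z ∉ K := hfz
  refine ⟨ofPSpan hpm E.incl E.injective, FiniteDimensional.finiteDimensional_submodule _, ?_⟩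
  calc Module.finrank F (pSpan F (π ∘ E.pm) (Set.range E.incl))
      ≤ Module.finrank F K :=
        Submodule.finrank_mono (pSpan_le hK (Set.range_subset_iff.2 fun y => hf _ ⟨y, rfl⟩))
    _ < Module.finrank F E.carrier :=
        Submodule.finrank_lt fun h => hzK (h.ge Submodule.mem_top)

theorem finrank_center_le_finrank_center_carrier (hp : p ≠ 0) [FiniteDimensional F E.carrier] :
    Module.finrank F (LieAlgebra.center F L) ≤
      Module.finrank F (LieAlgebra.center F E.carrier) :=
  (LinearEquiv.finrank_eq (Submodule.equivMapOfInjective E.incl.toLinearMap E.injective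
    (LieAlgebra.center F L).toSubmodule)).trans_le <|
      Submodule.finrank_mono fun _ ⟨_, hz, hx⟩ => hx ▸ E.incl_mem_center hp hz

theorem finrank_center_carrier_le_finrank_center [FiniteDimensional F E.carrier]
    (hc : ∀ x ∈ LieAlgebra.center F E.carrier, x ∈ Set.range E.incl) :
    Module.finrank F (LieAlgebra.center F E.carrier) ≤
      Module.finrank F (LieAlgebra.center F L) := by
  refine (Submodule.finrank_mono fun x hx => ?_).trans_eq (LinearEquiv.finrank_eq
    (Submodule.equivMapOfInjective E.incl.toLinearMap E.injective
      (LieAlgebra.center F L).toSubmodule)).symm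
  obtain ⟨y, rfl⟩ := hc x hx
  refine ⟨y, (LieModule.mem_maxTrivSubmodule F L L y).2 fun w => E.injective ?_, rfl⟩
  rw [E.incl.map_lie, map_zero]
  exact (LieModule.mem_maxTrivSubmodule F _ _ _).1 hx _

end PEnvelope

section AdRepresentation

attribute [local instance 100] LieRing.ofAssociativeRing

noncomputable def adPSpan (p : ℕ) (F : Type*) [Field F] (L : Type*) [LieRing L] [LieAlgebra F L] :
    LieSubalgebra F (Module.End F L) :=
  pSpan F (· ^ p) (Set.range (LieAlgebra.ad F L))

namespace PEnvelope

variable {p : ℕ} {F : Type u} [Field F] {L : Type u} [LieRing L] [LieAlgebra F L]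
  (E : PEnvelope p F L)

noncomputable def inclEquiv : L ≃ₗ[F] E.rangeIdeal :=
  LinearEquiv.ofInjective E.incl.toLinearMap E.injective

noncomputable def toEnd : E.carrier →ₗ⁅F⁆ Module.End F L :=
  E.inclEquiv.symm.lieConj.toLieHom.comp (LieModule.toEnd F E.carrier E.rangeIdeal)

theorem incl_toEnd_apply (g : E.carrier) (y : L) : E.incl (E.toEnd g y) = ⁅g, E.incl y⁆ := by
  have h := E.inclEquiv.apply_symm_apply
    (LieModule.toEnd F E.carrier E.rangeIdeal g (E.inclEquiv y))
  exact congrArg Subtype.val h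

theorem toEnd_incl (x : L) : E.toEnd (E.incl x) = LieAlgebra.ad F L x :=
  LinearMap.ext fun y => E.injective <| by rw [incl_toEnd_apply, ← E.incl.map_lie]; rfl

theorem toEnd_pm (g : E.carrier) : E.toEnd (E.pm g) = E.toEnd g ^ p := by
  have hpow : ∀ n y, E.incl ((E.toEnd g ^ n) y) = adIter g n (E.incl y) := by
    intro n y
    induction n with
    | zero => rfl
    | succ n ih => rw [pow_succ', Module.End.mul_apply, incl_toEnd_apply, ih]; rfl
  exact LinearMap.ext fun y => E.injective <| by rw [incl_toEnd_apply, hpow, E.isPMap.ad_pow]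

theorem ker_toEnd (hp : p ≠ 0) : E.toEnd.ker = LieAlgebra.center F E.carrier := by
  ext g
  rw [LieHom.mem_ker, E.mem_center_iff hp]
  refine ⟨fun h y => ?_, fun h => LinearMap.ext fun y => E.injective ?_⟩
  · rw [← lie_skew, ← incl_toEnd_apply, h, LinearMap.zero_apply, map_zero, neg_zero]
  · rw [incl_toEnd_apply, ← lie_skew, h, neg_zero, LinearMap.zero_apply, map_zero]

theorem range_toEnd : E.toEnd.range = adPSpan p F L := by
  refine le_antisymm ?_ (pSpan_le ?_ ?_)
  · have htop : (adPSpan p F L).comap E.toEnd = ⊤ := by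
      refine E.eq_top_of_isPSubalgebra (fun g hg => ?_) fun x => ?_
      · show E.toEnd (E.pm g) ∈ adPSpan p F L
        rw [toEnd_pm]
        exact isPSubalgebra_pSpan _ _ hg
      · show E.toEnd (E.incl x) ∈ adPSpan p F L
        rw [toEnd_incl]
        exact subset_pSpan _ ⟨x, rfl⟩
    rintro _ ⟨g, rfl⟩
    exact htop.ge (LieSubalgebra.mem_top g)
  · rintro _ ⟨g, rfl⟩
    exact ⟨E.pm g, E.toEnd_pm g⟩
  · rintro _ ⟨x, rfl⟩
    exact ⟨E.incl x, E.toEnd_incl x⟩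

theorem finrank_eq_finrank_adPSpan_add_finrank_center (hp : p ≠ 0)
    [FiniteDimensional F E.carrier] :
    Module.finrank F E.carrier =
      Module.finrank F (adPSpan p F L) + Module.finrank F (LieAlgebra.center F E.carrier) := by
  rw [← E.range_toEnd, ← E.ker_toEnd hp]
  exact (LinearMap.finrank_range_add_finrank_ker E.toEnd.toLinearMap).symm

end PEnvelope

end AdRepresentation

theorem pEnvelope_isMinimal_iff_center_le_general (p : ℕ) [Fact p.Prime]
    (F : Type u) [Field F] [CharP F p]
    (L : Type u) [LieRing L] [LieAlgebra F L]
    (E : PEnvelope p F L) [FiniteDimensional F E.carrier] :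
    E.IsMinimal ↔ ∀ x ∈ LieAlgebra.center F E.carrier, x ∈ Set.range E.incl := by
  have hp : p ≠ 0 := (Fact.out : p.Prime).ne_zero
  constructor
  · intro hmin z hz
    by_contra hzL
    obtain ⟨E', hE', hlt⟩ := E.exists_finrank_lt hp hz hzL
    exact (hmin.2 E' hE').not_gt hlt
  · intro hc
    refine ⟨inferInstance, fun E' _ => ?_⟩
    rw [E.finrank_eq_finrank_adPSpan_add_finrank_center hp,
      E'.finrank_eq_finrank_adPSpan_add_finrank_center hp]
    exact Nat.add_le_add_left ((E.finrank_center_carrier_le_finrank_center hc).trans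
      (E'.finrank_center_le_finrank_center_carrier hp)) _

/-- A finite-dimensional `p`-envelope `(G, [p], i)` of a finite-dimensional
Lie algebra `L` is minimal if and only if the center of `G` is contained in `i(L)`. -/
theorem pEnvelope_isMinimal_iff_center_le (p : ℕ) [Fact p.Prime]
    (F : Type u) [Field F] [CharP F p]
    (L : Type u) [LieRing L] [LieAlgebra F L] [FiniteDimensional F L]
    (E : PEnvelope p F L) [FiniteDimensional F E.carrier] :
    E.IsMinimal ↔ ∀ x ∈ LieAlgebra.center F E.carrier, x ∈ Set.range E.incl :=
  pEnvelope_isMinimal_iff_center_le_general p F L E
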